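/- arXiv:2201.01419 — 6 statements merged into one kernel-verified Lean document; each statement's English description precedes it below -/
import Mathlib

section
/- Assume n ≤ m and let j be a good with v_j ≥ μ. If π* is an optimal allocation and agent i receives good j under π*, then agent i receives no goods other than j, i.e., the bundle of i under π* is exactly {j}. -/
/-- The valuation of agent `i` under allocation `π`: the sum of utilities of goods assigned to `i`. -/
def V {G A : Type*} [Fintype G] [DecidableEq A] (v : G → ℝ) (π : G → A) (i : A) : ℝ :=
  ∑ j ∈ Finset.univ.filter (fun j => π j = i), v j

/-- Nash social welfare: geometric mean of agents' valuations. -/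
noncomputable def NSW {G A : Type*} [Fintype G] [Fintype A] [DecidableEq A]
    (v : G → ℝ) (π : G → A) : ℝ :=
  (∏ i, V v π i) ^ ((1 : ℝ) / (Fintype.card A))

/-- If `v j ≥ μ` and `π*` is optimal, then the agent receiving `j` receives only `j`. -/
theorem stmt0 (n m : ℕ) (hn : 0 < n) (hnm : n ≤ m)
    (v : Fin m → ℝ) (hv : ∀ j, 0 < v j)
    (j : Fin m) (hj : v j ≥ (∑ j', v j') / n)
    (πs : Fin m → Fin n)
    (hopt : ∀ π : Fin m → Fin n, NSW v π ≤ NSW v πs)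
    (i : Fin n) (hij : πs j = i) :
    Finset.univ.filter (fun j' => πs j' = i) = {j} := by
  classical
  have hnR : (0:ℝ) < n := by exact_mod_cast hn
  have hVnonneg : ∀ (π : Fin m → Fin n) (a : Fin n), 0 ≤ V v π a := by
    intro π a
    exact Finset.sum_nonneg (fun x _ => (hv x).le)
  -- positivity of all values under πs
  have hVpos : ∀ a : Fin n, 0 < V v πs a := by
    set π0 : Fin m → Fin n := fun g => ⟨g.val % n, Nat.mod_lt _ hn⟩ with hπ0
    have hpos0 : ∀ a : Fin n, 0 < V v π0 a := by
      intro a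
      apply Finset.sum_pos (fun x _ => hv x)
      refine ⟨⟨a.val, lt_of_lt_of_le a.isLt hnm⟩, ?_⟩
      simp [π0, Finset.mem_filter, Nat.mod_eq_of_lt a.isLt, Fin.ext_iff]
    have hprod0 : 0 < ∏ a, V v π0 a := Finset.prod_pos (fun a _ => hpos0 a)
    have hNSW0 : 0 < NSW v π0 := Real.rpow_pos_of_pos hprod0 _
    have h1 : 0 < NSW v πs := lt_of_lt_of_le hNSW0 (hopt π0)
    have hprod : 0 < ∏ a, V v πs a := by
      by_contra h
      push_neg at h
      have h0 : ∏ a, V v πs a = 0 :=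
        le_antisymm h (Finset.prod_nonneg (fun a _ => hVnonneg _ a))
      rw [NSW, h0, Real.zero_rpow (by simp [Fintype.card_fin]; positivity)] at h1
      exact lt_irrefl _ h1
    intro a
    rcases (hVnonneg πs a).lt_or_eq with h | h
    · exact h
    · exfalso
      have h0 : ∏ a', V v πs a' = 0 := Finset.prod_eq_zero (Finset.mem_univ a) h.symm
      rw [h0] at hprod; exact lt_irrefl _ hprod
  rw [Finset.eq_singleton_iff_unique_mem]
  refine ⟨by simp [Finset.mem_filter, hij], ?_⟩
  intro k hk
  by_contra hkj
  rw [Finset.mem_filter] at hk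
  have hki : πs k = i := hk.2
  have hjk : j ≠ k := fun h => hkj h.symm
  have hsub : ({j, k} : Finset (Fin m)) ⊆ Finset.univ.filter (fun j' => πs j' = i) := by
    intro x hx
    rcases Finset.mem_insert.mp hx with h | h
    · subst h; simp [Finset.mem_filter, hij]
    · rw [Finset.mem_singleton] at h; subst h; simp [Finset.mem_filter, hki]
  have hVi : v j + v k ≤ V v πs i := by
    have h := Finset.sum_le_sum_of_subset_of_nonneg hsub (fun x _ _ => (hv x).le)
    rwa [Finset.sum_pair hjk] at h
  set μ := (∑ j', v j') / n with hμdef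
  have hnμ : (n : ℝ) * μ = ∑ j', v j' := by rw [hμdef]; field_simp
  have hsum : ∑ a, V v πs a = ∑ j', v j' := by
    simp only [V]
    exact Finset.sum_fiberwise _ _ _
  -- there is a poor agent
  have hex : ∃ i', i' ≠ i ∧ V v πs i' < μ := by
    by_contra h
    push_neg at h
    have hge : ∀ i' ∈ Finset.univ.erase i, μ ≤ V v πs i' :=
      fun i' hi' => h i' (Finset.mem_erase.mp hi').1
    have hsum2 := Finset.card_nsmul_le_sum (Finset.univ.erase i) (V v πs) μ hge
    rw [nsmul_eq_mul] at hsum2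
    have hcard : (((Finset.univ.erase i).card : ℕ) : ℝ) = (n : ℝ) - 1 := by
      rw [Finset.card_erase_of_mem (Finset.mem_univ i), Finset.card_univ, Fintype.card_fin,
        Nat.cast_sub hn]
      simp
    rw [hcard] at hsum2
    have hsplit : V v πs i + ∑ i' ∈ Finset.univ.erase i, V v πs i' = ∑ j', v j' := by
      rw [Finset.add_sum_erase _ _ (Finset.mem_univ i), hsum]
    have hvk := hv k
    have hjμ : μ ≤ v j := hj
    linarith
  obtain ⟨i', hi'i, hi'μ⟩ := hex
  set π' : Fin m → Fin n := Function.update πs k i' with hπ'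
  have hA : V v π' i = V v πs i - v k := by
    have hset : Finset.univ.filter (fun x => π' x = i)
        = (Finset.univ.filter (fun x => πs x = i)).erase k := by
      ext x
      simp only [Finset.mem_filter, Finset.mem_erase, Finset.mem_univ, true_and]
      by_cases hx : x = k
      · subst hx; simp [π', Function.update_self, hi'i]
      · simp [π', Function.update_of_ne hx, hx]
    rw [V, hset, Finset.sum_erase_eq_sub (by simp [Finset.mem_filter, hki])]
    rfl
  have hB : V v π' i' = V v πs i' + v k := by
    have hset : Finset.univ.filter (fun x => π' x = i')
        = insert k (Finset.univ.filter (fun x => πs x = i')) := by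
      ext x
      simp only [Finset.mem_filter, Finset.mem_insert, Finset.mem_univ, true_and]
      by_cases hx : x = k
      · subst hx; simp [π', Function.update_self]
      · simp [π', Function.update_of_ne hx, hx]
    have hknotin : k ∉ Finset.univ.filter (fun x => πs x = i') := by
      intro h
      rw [Finset.mem_filter] at h
      exact hi'i (hki.symm.trans h.2).symm
    rw [V, hset, Finset.sum_insert hknotin]
    rw [V]; ring
  have hC : ∀ a : Fin n, a ≠ i → a ≠ i' → V v π' a = V v πs a := by
    intro a hai hai'
    have hset : Finset.univ.filter (fun x => π' x = a)
        = Finset.univ.filter (fun x => πs x = a) := by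
      ext x
      simp only [Finset.mem_filter, Finset.mem_univ, true_and]
      by_cases hx : x = k
      · subst hx
        simp only [π', Function.update_self, hki]
        exact iff_of_false (fun h => hai' h.symm) (fun h => hai h.symm)
      · simp [π', Function.update_of_ne hx]
    rw [V, hset]; rfl
  have hi'mem : i' ∈ Finset.univ.erase i := Finset.mem_erase.mpr ⟨hi'i, Finset.mem_univ i'⟩
  have hPP : ∏ a, V v πs a
      = V v πs i * (V v πs i' * ∏ a ∈ (Finset.univ.erase i).erase i', V v πs a) := by
    rw [← Finset.mul_prod_erase _ _ (Finset.mem_univ i),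
      ← Finset.mul_prod_erase _ _ hi'mem]
  have hPP' : ∏ a, V v π' a
      = V v π' i * (V v π' i' * ∏ a ∈ (Finset.univ.erase i).erase i', V v π' a) := by
    rw [← Finset.mul_prod_erase _ _ (Finset.mem_univ i),
      ← Finset.mul_prod_erase _ _ hi'mem]
  have hQ : ∏ a ∈ (Finset.univ.erase i).erase i', V v π' a
      = ∏ a ∈ (Finset.univ.erase i).erase i', V v πs a := by
    refine Finset.prod_congr rfl (fun a ha => ?_)
    have h1 := Finset.mem_erase.mp ha
    have h2 := Finset.mem_erase.mp h1.2
    exact hC a h2.1 h1.1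
  have hQpos : 0 < ∏ a ∈ (Finset.univ.erase i).erase i', V v πs a :=
    Finset.prod_pos (fun a _ => hVpos a)
  have hkey : V v πs i * V v πs i' < (V v πs i - v k) * (V v πs i' + v k) := by
    have hvk := hv k
    have h1 : μ ≤ V v πs i - v k := by linarith [hj]
    nlinarith [mul_pos hvk (show (0:ℝ) < (V v πs i - v k) - V v πs i' by linarith)]
  have hlt : ∏ a, V v πs a < ∏ a, V v π' a := by
    rw [hPP, hPP', hA, hB, hQ]
    calc V v πs i * (V v πs i' * ∏ a ∈ (Finset.univ.erase i).erase i', V v πs a)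
        = (V v πs i * V v πs i') * ∏ a ∈ (Finset.univ.erase i).erase i', V v πs a := by ring
      _ < ((V v πs i - v k) * (V v πs i' + v k))
            * ∏ a ∈ (Finset.univ.erase i).erase i', V v πs a :=
          mul_lt_mul_of_pos_right hkey hQpos
      _ = (V v πs i - v k) * ((V v πs i' + v k)
            * ∏ a ∈ (Finset.univ.erase i).erase i', V v πs a) := by ring
  have hfinal : NSW v πs < NSW v π' := by
    simp only [NSW, Fintype.card_fin]
    exact Real.rpow_lt_rpow (Finset.prod_nonneg (fun a _ => hVnonneg πs a)) hlt
      (div_pos one_pos hnR)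
  exact absurd (hopt π') (not_le.mpr hfinal)
end

section
/- Assume n ≤ m. If π* is an optimal allocation, then for every agent i it holds that μ − v_max < V_i(π*) < μ + v_max. -/
/-!
Moving a good `j` from its owner `a` to another agent `b` changes the product of valuations
from `V_a V_b` to `(V_a - v_j)(V_b + v_j)`, which is larger as soon as `v_j < V_a - V_b`.
Hence in an optimal allocation (whose valuations are all positive, as `n ≤ m`) any two
valuations differ by at most `v_max`. Averaging this over all agents, with the strict
inequality `0 < v_max` for the agent itself, puts every valuation strictly within `v_max`
of the mean `μ`.
-/

open Finset Function

theorem mem_Ioo_mean_of_forall_sub_le {ι : Type*} [Fintype ι] (f : ι → ℝ) {c : ℝ} (hc : 0 < c)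
    (h : ∀ k l, f k - f l ≤ c) (i : ι) :
    f i ∈ Set.Ioo ((∑ k, f k) / Fintype.card ι - c) ((∑ k, f k) / Fintype.card ι + c) := by
  have hcard : (0 : ℝ) < Fintype.card ι := by
    have : Nonempty ι := ⟨i⟩
    exact_mod_cast Fintype.card_pos
  have hlow : ∑ k, (f k - f i) < ∑ _k : ι, c :=
    sum_lt_sum (fun k _ => h k i) ⟨i, mem_univ i, by simpa using hc⟩
  have hup : ∑ k, (f i - f k) < ∑ _k : ι, c :=
    sum_lt_sum (fun k _ => h i k) ⟨i, mem_univ i, by simpa using hc⟩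
  simp only [sum_sub_distrib, sum_const, card_univ, nsmul_eq_mul] at hlow hup
  rw [Set.mem_Ioo]
  constructor
  · rw [sub_lt_iff_lt_add, div_lt_iff₀ hcard]
    linarith
  · rw [add_comm, ← sub_lt_iff_lt_add', lt_div_iff₀ hcard]
    linarith

section Allocation

variable {G A : Type*} [Fintype G] [DecidableEq A] (v : G → ℝ)

theorem sum_V [Fintype A] (π : G → A) : ∑ i, V v π i = ∑ j, v j := by
  unfold V
  rw [sum_fiberwise]

theorem V_nonneg (hv : ∀ j, 0 ≤ v j) (π : G → A) (i : A) : 0 ≤ V v π i :=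
  sum_nonneg fun j _ => hv j

theorem V_pos_of_apply_eq (hv : ∀ j, 0 < v j) {π : G → A} {i : A} {j : G} (h : π j = i) :
    0 < V v π i :=
  sum_pos (fun j _ => hv j) ⟨j, by simpa using h⟩

theorem exists_apply_eq_of_V_ne_zero {π : G → A} {i : A} (h : V v π i ≠ 0) : ∃ j, π j = i := by
  obtain ⟨j, hj, -⟩ := exists_ne_zero_of_sum_ne_zero h
  exact ⟨j, (mem_filter.1 hj).2⟩

variable [DecidableEq G] {v}

theorem V_update_self {π : G → A} {j : G} {b : A} (hb : π j ≠ b) :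
    V v (update π j b) b = V v π b + v j := by
  unfold V
  have : univ.filter (fun k => update π j b k = b) = insert j (univ.filter (fun k => π k = b)) := by
    ext k
    by_cases hk : k = j <;> simp [update_apply, hk]
  rw [this, sum_insert (by simp [hb]), add_comm]

theorem V_update_apply {π : G → A} {j : G} {b : A} (hb : π j ≠ b) :
    V v (update π j b) (π j) = V v π (π j) - v j := by
  unfold V
  have : univ.filter (fun k => update π j b k = π j) = (univ.filter (fun k => π k = π j)).erase j := by
    ext k
    by_cases hk : k = j <;> simp [update_apply, hk, Ne.symm hb]
  rw [this, sum_erase_eq_sub (by simp)]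

theorem V_update_of_ne {π : G → A} {j : G} {b i : A} (hi : i ≠ π j) (hib : i ≠ b) :
    V v (update π j b) i = V v π i := by
  unfold V
  congr 1
  ext k
  by_cases hk : k = j <;> simp [update_apply, hk, Ne.symm hi, Ne.symm hib]

theorem prod_V_lt_prod_V_update [Fintype A] {π : G → A} (hpos : ∀ i, 0 < V v π i) {j : G}
    (hvj : 0 < v j) {b : A} (hgain : v j < V v π (π j) - V v π b) :
    ∏ i, V v π i < ∏ i, V v (update π j b) i := by
  set a := π j
  have hb : a ≠ b := by
    rintro rfl
    linarith
  have hmem : b ∈ univ.erase a := mem_erase.2 ⟨Ne.symm hb, mem_univ b⟩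
  set rest := (univ.erase a).erase b
  have split : ∀ f : A → ℝ, ∏ i, f i = f a * f b * ∏ i ∈ rest, f i := fun f => by
    rw [mul_assoc, mul_prod_erase _ _ hmem, mul_prod_erase _ _ (mem_univ a)]
  have hrest : ∏ i ∈ rest, V v (update π j b) i = ∏ i ∈ rest, V v π i :=
    prod_congr rfl fun i hi =>
      V_update_of_ne (mem_erase.1 (mem_erase.1 hi).2).1 (mem_erase.1 hi).1
  rw [split (V v π), split (V v (update π j b)), hrest, V_update_apply hb, V_update_self hb]
  have hrest_pos : 0 < ∏ i ∈ rest, V v π i := prod_pos fun i _ => hpos i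
  -- `(V_a - v_j)(V_b + v_j) - V_a V_b = v_j (V_a - V_b - v_j)`
  have hprod : V v π a * V v π b < (V v π a - v j) * (V v π b + v j) := by
    nlinarith [mul_pos hvj (sub_pos.2 hgain)]
  exact mul_lt_mul_of_pos_right hprod hrest_pos

end Allocation

section NashWelfare

variable {G A : Type*} [Fintype G] [Fintype A] [DecidableEq A] {v : G → ℝ}

theorem NSW_lt_NSW_of_prod_lt [Nonempty A] {π π' : G → A} (h0 : 0 ≤ ∏ i, V v π i)
    (h : ∏ i, V v π i < ∏ i, V v π' i) : NSW v π < NSW v π' :=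
  Real.rpow_lt_rpow h0 h (by positivity)

theorem NSW_pos_of_forall_V_pos {π : G → A} (h : ∀ i, 0 < V v π i) : 0 < NSW v π :=
  Real.rpow_pos_of_pos (prod_pos fun i _ => h i) _

theorem NSW_eq_zero_of_V_eq_zero [Nonempty A] {π : G → A} {i : A} (h : V v π i = 0) : NSW v π = 0 := by
  rw [NSW, prod_eq_zero (mem_univ i) h, Real.zero_rpow (by positivity)]

theorem exists_forall_V_pos [Nonempty A] (hv : ∀ j, 0 < v j) (hcard : Fintype.card A ≤ Fintype.card G) :
    ∃ π : G → A, ∀ i, 0 < V v π i := by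
  obtain ⟨e⟩ := Function.Embedding.nonempty_of_card_le hcard
  exact ⟨invFun e, fun i => V_pos_of_apply_eq v hv (leftInverse_invFun e.injective i)⟩

theorem forall_V_pos_of_optimal [Nonempty A] (hv : ∀ j, 0 < v j) (hcard : Fintype.card A ≤ Fintype.card G)
    {πs : G → A} (hopt : ∀ π : G → A, NSW v π ≤ NSW v πs) (i : A) : 0 < V v πs i := by
  refine (V_nonneg v (fun j => (hv j).le) πs i).lt_of_ne fun hzero => ?_
  obtain ⟨π, hπ⟩ := exists_forall_V_pos hv hcard
  have := (NSW_pos_of_forall_V_pos hπ).trans_le (hopt π)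
  rw [NSW_eq_zero_of_V_eq_zero hzero.symm] at this
  exact this.false

theorem V_sub_V_le_of_optimal [Nonempty A] [DecidableEq G] (hv : ∀ j, 0 < v j) {πs : G → A}
    (hpos : ∀ i, 0 < V v πs i) (hopt : ∀ π : G → A, NSW v π ≤ NSW v πs) (j : G) (b : A) :
    V v πs (πs j) - V v πs b ≤ v j := by
  by_contra! hgain
  have hprod := prod_V_lt_prod_V_update hpos (hv j) hgain
  exact (NSW_lt_NSW_of_prod_lt (prod_pos fun i _ => hpos i).le hprod).not_ge (hopt _)

end NashWelfare

theorem stmt1_general (n m : ℕ) (hnm : n ≤ m)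
    (v : Fin m → ℝ) (hv : ∀ j, 0 < v j)
    (vmax : ℝ) (hvmax : IsGreatest (Set.range v) vmax)
    (πs : Fin m → Fin n)
    (hopt : ∀ π : Fin m → Fin n, NSW v π ≤ NSW v πs)
    (i : Fin n) :
    (∑ j, v j) / n - vmax < V v πs i ∧ V v πs i < (∑ j, v j) / n + vmax := by
  have : Nonempty (Fin n) := ⟨i⟩
  have hpos := forall_V_pos_of_optimal hv (by simpa using hnm) hopt
  have hspread : ∀ k l, V v πs k - V v πs l ≤ vmax := fun k l => by
    obtain ⟨j, rfl⟩ := exists_apply_eq_of_V_ne_zero v (hpos k).ne'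
    exact (V_sub_V_le_of_optimal hv hpos hopt j l).trans (hvmax.2 ⟨j, rfl⟩)
  have hvmax_pos : 0 < vmax := by
    obtain ⟨j, rfl⟩ := hvmax.1
    exact hv j
  simpa only [sum_V, Fintype.card_fin, Set.mem_Ioo] using
    mem_Ioo_mean_of_forall_sub_le (V v πs) hvmax_pos hspread i

/-- In an optimal allocation, every agent's valuation lies in `(μ - v_max, μ + v_max)`. -/
theorem stmt1 (n m : ℕ) (hn : 0 < n) (hnm : n ≤ m)
    (v : Fin m → ℝ) (hv : ∀ j, 0 < v j)
    (vmax : ℝ) (hvmax : IsGreatest (Set.range v) vmax)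
    (πs : Fin m → Fin n)
    (hopt : ∀ π : Fin m → Fin n, NSW v π ≤ NSW v πs)
    (i : Fin n) :
    (∑ j, v j) / n - vmax < V v πs i ∧ V v πs i < (∑ j, v j) / n + vmax :=
  stmt1_general n m hnm v hv vmax hvmax πs hopt i
end

section
/- Let n ≥ 1 be an integer, δ ≥ 0 a real number, and x, y : Fin n → ℝ with x_i > 0, y_i ≥ 0, and |y_i − x_i| ≤ δ for every i. Then (∏_i y_i)^{1/n} ≤ (∏_i x_i)^{1/n} · (1 + (δ/n) · Σ_i 1/x_i). -/
/-!
Write `y = x · (y / x)` pointwise. The geometric mean is multiplicative, so the geometric mean of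
`y` is that of `x` times that of the ratios `y i / x i`; by AM-GM the latter is at most their
arithmetic mean, and `y i / x i ≤ 1 + δ / x i`.
-/

open Finset

theorem Real.geom_mean_le_arith_mean_univ {ι : Type*} [Fintype ι] [Nonempty ι] {z : ι → ℝ}
    (hz : ∀ i, 0 ≤ z i) :
    (∏ i, z i) ^ ((1 : ℝ) / Fintype.card ι) ≤ (∑ i, z i) / Fintype.card ι := by
  simpa [one_div] using
    Real.geom_mean_le_arith_mean univ (fun _ ↦ 1) z (fun _ _ ↦ zero_le_one)
      (by simp [Fintype.card_pos]) (fun i _ ↦ hz i)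

theorem Real.prod_mul_rpow {ι : Type*} (s : Finset ι) {a b : ι → ℝ} (ha : ∀ i ∈ s, 0 ≤ a i)
    (hb : ∀ i ∈ s, 0 ≤ b i) (p : ℝ) :
    (∏ i ∈ s, a i * b i) ^ p = (∏ i ∈ s, a i) ^ p * (∏ i ∈ s, b i) ^ p := by
  rw [prod_mul_distrib, Real.mul_rpow (prod_nonneg ha) (prod_nonneg hb)]

theorem stmt3_general (n : ℕ) (hn : 1 ≤ n) (δ : ℝ)
    (x y : Fin n → ℝ) (hx : ∀ i, 0 < x i) (hy : ∀ i, 0 ≤ y i)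
    (hxy : ∀ i, |y i - x i| ≤ δ) :
    (∏ i, y i) ^ ((1 : ℝ) / n) ≤
      (∏ i, x i) ^ ((1 : ℝ) / n) * (1 + (δ / n) * ∑ i, 1 / x i) := by
  have : Nonempty (Fin n) := Fin.pos_iff_nonempty.mp hn
  have hratio : ∀ i, y i / x i ≤ 1 + δ * (1 / x i) := fun i ↦ by
    rw [div_le_iff₀ (hx i), add_mul, mul_assoc, one_div_mul_cancel (hx i).ne']
    linarith [(abs_le.mp (hxy i)).2]
  have hamgm : (∏ i, y i / x i) ^ ((1 : ℝ) / n) ≤ (∑ i, y i / x i) / n := by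
    simpa using Real.geom_mean_le_arith_mean_univ fun i ↦ div_nonneg (hy i) (hx i).le
  have hmean : (∑ i, y i / x i) / n ≤ 1 + (δ / n) * ∑ i, 1 / x i := by
    have hn' : (0 : ℝ) < n := by exact_mod_cast hn
    rw [div_le_iff₀ hn']
    calc ∑ i, y i / x i ≤ ∑ i, (1 + δ * (1 / x i)) := sum_le_sum fun i _ ↦ hratio i
      _ = (1 + (δ / n) * ∑ i, 1 / x i) * n := by
        rw [sum_add_distrib, ← mul_sum]
        field_simp
        simp
  calc (∏ i, y i) ^ ((1 : ℝ) / n)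
      = (∏ i, x i * (y i / x i)) ^ ((1 : ℝ) / n) := by
        simp_rw [mul_div_cancel₀ _ (hx _).ne']
    _ = (∏ i, x i) ^ ((1 : ℝ) / n) * (∏ i, y i / x i) ^ ((1 : ℝ) / n) :=
        Real.prod_mul_rpow _ (fun i _ ↦ (hx i).le) (fun i _ ↦ div_nonneg (hy i) (hx i).le) _
    _ ≤ (∏ i, x i) ^ ((1 : ℝ) / n) * (1 + (δ / n) * ∑ i, 1 / x i) := by
        gcongr
        · exact Real.rpow_nonneg (prod_nonneg fun i _ ↦ (hx i).le) _
        · exact hamgm.trans hmean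

/-- Geometric-mean comparison for pointwise `δ`-close families of positive reals. -/
theorem stmt3 (n : ℕ) (hn : 1 ≤ n) (δ : ℝ) (hδ : 0 ≤ δ)
    (x y : Fin n → ℝ) (hx : ∀ i, 0 < x i) (hy : ∀ i, 0 ≤ y i)
    (hxy : ∀ i, |y i - x i| ≤ δ) :
    (∏ i, y i) ^ ((1 : ℝ) / n) ≤
      (∏ i, x i) ^ ((1 : ℝ) / n) * (1 + (δ / n) * ∑ i, 1 / x i) :=
  stmt3_general n hn δ x y hx hy hxy
end

section
/- Assume n ≤ m, v_max < μ, and 0 < ε ≤ 1/5. Let π* be an optimal allocation and let π be an allocation satisfying |V_i(π) − V_i(π*)| ≤ 2ε·v_max for every agent i. Then f(π*) ≤ (1 + 20ε) · f(π). -/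
/-- Multiplicative error bound: `f(π*) ≤ (1 + 20ε) f(π)`. -/
theorem stmt5 (n m : ℕ) (hn : 0 < n) (hnm : n ≤ m)
    (v : Fin m → ℝ) (hv : ∀ j, 0 < v j)
    (vmax : ℝ) (hvmax : IsGreatest (Set.range v) vmax)
    (hlt : vmax < (∑ j, v j) / n)
    (ε : ℝ)
    (πs : Fin m → Fin n)
    (hopt : ∀ π' : Fin m → Fin n, NSW v π' ≤ NSW v πs)
    (π : Fin m → Fin n)
    (hclose : ∀ i, |V v π i - V v πs i| ≤ 2 * ε * vmax)
    (hε : 0 < ε) (hε' : ε ≤ 1/5) :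
    NSW v πs ≤ (1 + 20 * ε) * NSW v π := by
  classical
  haveI : Nonempty (Fin n) := ⟨⟨0, hn⟩⟩
  have hn' : (0:ℝ) < n := by exact_mod_cast hn
  have hvmax_pos : 0 < vmax := by
    obtain ⟨j0, hj0⟩ := hvmax.1
    exact hj0 ▸ hv j0
  have hvle : ∀ j, v j ≤ vmax := fun j => hvmax.2 ⟨j, rfl⟩
  have hVnonneg : ∀ (π' : Fin m → Fin n) (i : Fin n), 0 ≤ V v π' i :=
    fun π' i => Finset.sum_nonneg fun j _ => (hv j).le
  have hμpos : (0:ℝ) < (∑ j, v j) / n := lt_trans hvmax_pos hlt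
  have hcard : ((Fintype.card (Fin n)) : ℝ) = (n:ℝ) := by simp
  have hexp : (0:ℝ) < 1 / (Fintype.card (Fin n)) := by
    rw [hcard]; positivity
  -- a fully-supported allocation exists
  have hπ0 : ∃ π0 : Fin m → Fin n, ∀ i, 0 < V v π0 i := by
    refine ⟨fun j => ⟨j.val % n, Nat.mod_lt _ hn⟩, fun i => ?_⟩
    apply Finset.sum_pos (fun j _ => hv j)
    refine ⟨⟨i.val, lt_of_lt_of_le i.isLt hnm⟩, ?_⟩
    simp [Fin.ext_iff, Nat.mod_eq_of_lt i.isLt]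
  obtain ⟨π0, hπ0⟩ := hπ0
  have hprodπs : 0 < ∏ i, V v πs i := by
    have h0 : 0 < ∏ i, V v π0 i := Finset.prod_pos (fun i _ => hπ0 i)
    have h1 : 0 < NSW v π0 := Real.rpow_pos_of_pos h0 _
    have h2 := hopt π0
    by_contra hle
    have hz : ∏ i, V v πs i = 0 :=
      le_antisymm (not_lt.mp hle) (Finset.prod_nonneg fun i _ => hVnonneg _ i)
    unfold NSW at h2
    rw [hz, Real.zero_rpow (ne_of_gt hexp)] at h2
    linarith [Real.rpow_pos_of_pos h0 ((1:ℝ) / (Fintype.card (Fin n)))]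
  have hVs_pos : ∀ i, 0 < V v πs i := by
    intro i
    rcases (hVnonneg πs i).lt_or_eq with h | h
    · exact h
    · exfalso
      have : ∏ i, V v πs i = 0 := Finset.prod_eq_zero (Finset.mem_univ i) h.symm
      linarith
  -- total value is preserved
  have hsum : ∑ i, V v πs i = ∑ j, v j := Finset.sum_fiberwise _ _ _
  -- a rich agent exists
  obtain ⟨k, -, hk⟩ : ∃ k ∈ Finset.univ, (∑ j, v j) / n ≤ V v πs k := by
    apply Finset.exists_le_of_sum_le Finset.univ_nonempty
    rw [hsum, Finset.sum_const, Finset.card_univ, Fintype.card_fin, nsmul_eq_mul]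
    field_simp
    exact le_rfl
  -- the rich agent has a small good
  set S := Finset.univ.filter (fun j => πs j = k) with hS
  have hVkS : V v πs k = ∑ x ∈ S, v x := rfl
  have hSne : S.Nonempty := by
    by_contra h
    rw [Finset.not_nonempty_iff_eq_empty] at h
    have : V v πs k = 0 := by rw [hVkS, h, Finset.sum_empty]
    linarith [hk]
  obtain ⟨j, hjS, hjmin⟩ := S.exists_min_image v hSne
  have hjk : πs j = k := (Finset.mem_filter.mp hjS).2
  obtain ⟨j', hj'S, hj'ne⟩ : ∃ j' ∈ S, j' ≠ j := by
    by_contra h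
    push_neg at h
    have hSsub : S = {j} := Finset.eq_singleton_iff_unique_mem.mpr ⟨hjS, h⟩
    have h1 : V v πs k = v j := by rw [hVkS, hSsub, Finset.sum_singleton]
    have h2 := hvle j
    linarith [hk, hlt]
  have hjhalf : v j ≤ V v πs k / 2 := by
    have hsub : ({j, j'} : Finset (Fin m)) ⊆ S := by
      intro x hx
      rcases Finset.mem_insert.mp hx with h | h
      · exact h ▸ hjS
      · exact (Finset.mem_singleton.mp h) ▸ hj'S
    have h1 : v j + v j' ≤ ∑ x ∈ S, v x := by
      rw [← Finset.sum_pair (Ne.symm hj'ne)]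
      exact Finset.sum_le_sum_of_subset_of_nonneg hsub (fun x _ _ => (hv x).le)
    have h2 := hjmin j' hj'S
    rw [hVkS]
    linarith
  -- every agent gets more than vmax / 2 in the optimal allocation
  have hhalf : ∀ i, vmax / 2 < V v πs i := by
    intro i
    by_cases hik : i = k
    · subst hik; linarith [hk, hlt]
    have hmain : V v πs k - v j ≤ V v πs i := by
      by_contra hcon
      push_neg at hcon
      set π' : Fin m → Fin n := Function.update πs j i with hπ'
      have hfi : Finset.univ.filter (fun x => π' x = i)
          = insert j (Finset.univ.filter (fun x => πs x = i)) := by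
        ext x
        simp only [Finset.mem_filter, Finset.mem_univ, true_and, Finset.mem_insert,
          hπ', Function.update_apply]
        by_cases hx : x = j
        · simp [hx]
        · simp [hx]
      have hfk : Finset.univ.filter (fun x => π' x = k) = S.erase j := by
        ext x
        simp only [hS, Finset.mem_filter, Finset.mem_univ, true_and, Finset.mem_erase,
          hπ', Function.update_apply]
        by_cases hx : x = j
        · simp [hx, hik]
        · simp [hx]
      have hfl : ∀ l, l ≠ i → l ≠ k → V v π' l = V v πs l := by
        intro l hli hlk
        unfold V
        congr 1
        ext x
        simp only [Finset.mem_filter, Finset.mem_univ, true_and, hπ', Function.update_apply]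
        by_cases hx : x = j
        · simp [hx, hjk, Ne.symm hli, Ne.symm hlk]
        · simp [hx]
      have hjnotin : j ∉ Finset.univ.filter (fun x => πs x = i) := by
        simp only [Finset.mem_filter, Finset.mem_univ, true_and, hjk]
        exact fun h => hik h.symm
      have hVi' : V v π' i = V v πs i + v j := by
        rw [V, hfi, Finset.sum_insert hjnotin]
        rw [V]; ring
      have hVk' : V v π' k = V v πs k - v j := by
        rw [V, hfk, Finset.sum_erase_eq_sub hjS, ← hVkS]
      have hine : i ∈ Finset.univ.erase k := by simp [hik]
      have hsplit : ∀ w : Fin n → ℝ,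
          ∏ l, w l = w k * (w i * ∏ l ∈ (Finset.univ.erase k).erase i, w l) := by
        intro w
        rw [← Finset.mul_prod_erase Finset.univ w (Finset.mem_univ k),
            ← Finset.mul_prod_erase _ w hine]
      have hP' : ∏ l ∈ (Finset.univ.erase k).erase i, V v π' l
          = ∏ l ∈ (Finset.univ.erase k).erase i, V v πs l := by
        apply Finset.prod_congr rfl
        intro l hl
        simp only [Finset.mem_erase] at hl
        exact hfl l hl.1 hl.2.1
      have hPpos : 0 < ∏ l ∈ (Finset.univ.erase k).erase i, V v πs l :=
        Finset.prod_pos fun l _ => hVs_pos l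
      have hprodlt : ∏ l, V v πs l < ∏ l, V v π' l := by
        rw [hsplit (V v πs), hsplit (V v π'), hP', hVi', hVk']
        have h2 := hv j
        nlinarith [mul_pos hPpos (mul_pos h2
          (by linarith : (0:ℝ) < V v πs k - V v πs i - v j))]
      have hNSW : NSW v πs < NSW v π' := by
        unfold NSW
        exact Real.rpow_lt_rpow (Finset.prod_nonneg fun l _ => hVnonneg _ _) hprodlt hexp
      exact absurd (hopt π') (not_le.mpr hNSW)
    linarith [hk, hlt, hjhalf, hmain]
  -- factorwise bound
  have hfac : ∀ i, V v πs i ≤ (1 + 20 * ε) * V v π i := by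
    intro i
    have h1 := hclose i
    have h2 := hhalf i
    rw [abs_le] at h1
    nlinarith [hvmax_pos, mul_pos hε hvmax_pos, sq_nonneg ε, h1.1, h1.2]
  have hprodle : ∏ i, V v πs i ≤ ∏ i, ((1 + 20 * ε) * V v π i) :=
    Finset.prod_le_prod (fun i _ => hVnonneg _ _) (fun i _ => hfac i)
  have hrw : ∏ i, ((1 + 20 * ε) * V v π i) = (1 + 20 * ε) ^ n * ∏ i, V v π i := by
    rw [Finset.prod_mul_distrib, Finset.prod_const, Finset.card_univ, Fintype.card_fin]
  have h1ε : (0:ℝ) ≤ 1 + 20 * ε := by linarith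
  have hπnn : (0:ℝ) ≤ ∏ i, V v π i := Finset.prod_nonneg fun i _ => hVnonneg _ _
  unfold NSW
  rw [hcard]
  calc (∏ i, V v πs i) ^ ((1:ℝ)/(n:ℝ))
      ≤ ((1 + 20 * ε) ^ n * ∏ i, V v π i) ^ ((1:ℝ)/(n:ℝ)) := by
        apply Real.rpow_le_rpow (Finset.prod_nonneg fun i _ => hVnonneg _ _)
          (hrw ▸ hprodle) (by positivity)
    _ = (1 + 20 * ε) * (∏ i, V v π i) ^ ((1:ℝ)/(n:ℝ)) := by
        rw [Real.mul_rpow (by positivity) hπnn, ← Real.rpow_natCast (1 + 20 * ε) n,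
          ← Real.rpow_mul h1ε, mul_one_div, div_self (ne_of_gt hn'), Real.rpow_one]
end

section
/- Assume n ≤ m and 0 < ε ≤ 1/192. Let π* be an optimal allocation and π an allocation. Let A_0 be a set of k agents with k < n, and suppose there is an injective map σ from A_0 to the goods such that for every i ∈ A_0 both π and π* assign to i exactly the single good σ(i) and nothing else; let G_0 = σ(A_0). Consider the reduced instance I' on the agents outside A_0 and the goods outside G_0, with average valuation μ' = (Σ_{j∉G_0} v_j)/(n−k) and maximum utility w = max_{j∉G_0} v_j. Assume w < μ' and that the restriction of π* to the agents outside A_0 and goods outside G_0 is an optimal allocation of I'. If (∏_{i∉A_0} V_i(π))^{1/(n−k)} ≥ (∏_{i∉A_0} V_i(π*))^{1/(n−k)} − 48ε·w, then f(π) ≥ f(π*) − 192ε·v_max. -/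
set_option maxHeartbeats 2000000 in
/-- The additive guarantee on the reduced instance (after the preprocessing that gives each
agent in `A0` a single valuable good) lifts to an additive guarantee `192 ε v_max` for the
full instance. -/
theorem stmt10 (n m : ℕ) (hn : 0 < n) (hnm : n ≤ m)
    (v : Fin m → ℝ) (hv : ∀ j, 0 < v j)
    (vmax : ℝ) (hvmax : IsGreatest (Set.range v) vmax)
    (ε : ℝ) (hε : 0 < ε) (hε' : ε ≤ 1 / 192)
    (πs : Fin m → Fin n)
    (hopt : ∀ π' : Fin m → Fin n, NSW v π' ≤ NSW v πs)
    (π : Fin m → Fin n)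
    -- the removed agents `A0` and the matching `σ` to the removed goods `G0`
    (k : ℕ) (A0 : Finset (Fin n)) (hA0card : A0.card = k) (hkn : k < n)
    (σ : Fin n → Fin m) (hσinj : Set.InjOn σ A0)
    (G0 : Finset (Fin m)) (hG0 : G0 = A0.image σ)
    (hπbundle : ∀ i ∈ A0, Finset.univ.filter (fun j => π j = i) = {σ i})
    (hπsbundle : ∀ i ∈ A0, Finset.univ.filter (fun j => πs j = i) = {σ i})
    -- the reduced instance: `w` is its maximum utility, `μ' = (∑_{j ∉ G0} v j)/(n-k)` its mean
    (w : ℝ) (hwub : ∀ j ∉ G0, v j ≤ w) (hwmem : ∃ j ∉ G0, v j = w)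
    (hwμ' : w < (∑ j ∈ G0ᶜ, v j) / ((n : ℝ) - (k : ℝ)))
    -- the restriction of `πs` is optimal for the reduced instance
    (hopt' : ∀ ρ : Fin m → Fin n,
      (∀ i ∈ A0, Finset.univ.filter (fun j => ρ j = i) = {σ i}) →
      (∏ i ∈ A0ᶜ, V v ρ i) ^ ((1 : ℝ) / ((n : ℝ) - (k : ℝ))) ≤
        (∏ i ∈ A0ᶜ, V v πs i) ^ ((1 : ℝ) / ((n : ℝ) - (k : ℝ))))
    -- the additive guarantee on the reduced instance
    (hred : (∏ i ∈ A0ᶜ, V v π i) ^ ((1 : ℝ) / ((n : ℝ) - (k : ℝ))) ≥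
      (∏ i ∈ A0ᶜ, V v πs i) ^ ((1 : ℝ) / ((n : ℝ) - (k : ℝ))) - 48 * ε * w) :
    NSW v π ≥ NSW v πs - 192 * ε * vmax := by
  classical
  -- basic positivity facts
  have hmpos : 0 < m := lt_of_lt_of_le hn hnm
  have hvmaxpos : 0 < vmax := by
    have j0 : Fin m := ⟨0, hmpos⟩
    exact lt_of_lt_of_le (hv j0) (hvmax.2 ⟨j0, rfl⟩)
  obtain ⟨jw, hjw, hjweq⟩ := hwmem
  have hwpos : 0 < w := hjweq ▸ hv jw
  have hwle : w ≤ vmax := hjweq ▸ hvmax.2 ⟨jw, rfl⟩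
  set NK : ℝ := (n : ℝ) - (k : ℝ) with hNKdef
  have hkr : (k : ℝ) < (n : ℝ) := by exact_mod_cast hkn
  have hNKpos : 0 < NK := by rw [hNKdef]; linarith
  have hNpos : (0 : ℝ) < (n : ℝ) := by exact_mod_cast hn
  have hNKcast : ((n - k : ℕ) : ℝ) = NK := by
    rw [Nat.cast_sub hkn.le]
  have hVnn : ∀ (ρ : Fin m → Fin n) i, 0 ≤ V v ρ i := fun ρ i =>
    Finset.sum_nonneg fun j _ => (hv j).le
  -- πs maps σ i to i for i ∈ A0
  have hσπs : ∀ i ∈ A0, πs (σ i) = i := by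
    intro i hi
    have h : σ i ∈ Finset.univ.filter (fun j => πs j = i) := by
      rw [hπsbundle i hi]; exact Finset.mem_singleton_self _
    simpa using h
  -- goods outside G0 go to agents outside A0 under πs
  have hout : ∀ j, j ∉ G0 → πs j ∉ A0 := by
    intro j hj hmem
    have h : j ∈ Finset.univ.filter (fun j' => πs j' = πs j) := by simp
    rw [hπsbundle _ hmem] at h
    have h2 : j = σ (πs j) := Finset.mem_singleton.mp h
    exact hj (hG0 ▸ Finset.mem_image.mpr ⟨πs j, hmem, h2.symm⟩)
  -- goods in G0 go to their A0 owner under πs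
  have hin : ∀ j ∈ G0, πs j ∈ A0 := by
    intro j hj
    obtain ⟨i, hi, hij⟩ := Finset.mem_image.mp (hG0 ▸ hj)
    rw [← hij, hσπs i hi]; exact hi
  -- valuations of A0 agents
  have hVπA0 : ∀ i ∈ A0, V v π i = v (σ i) := fun i hi => by
    rw [V, hπbundle i hi, Finset.sum_singleton]
  have hVπsA0 : ∀ i ∈ A0, V v πs i = v (σ i) := fun i hi => by
    rw [V, hπsbundle i hi, Finset.sum_singleton]
  -- every agent gets positive value under the globally optimal πs
  have hcardn : ((Fintype.card (Fin n) : ℝ)) = (n : ℝ) := by simp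
  have hposall : ∀ i : Fin n, 0 < V v πs i := by
    set ρ0 : Fin m → Fin n := fun j => if h : (j : ℕ) < n then ⟨j, h⟩ else ⟨0, hn⟩ with hρ0
    have hρ0pos : ∀ i : Fin n, 0 < V v ρ0 i := by
      intro i
      have hjlt : (i : ℕ) < m := lt_of_lt_of_le i.2 hnm
      have hval : ρ0 ⟨(i : ℕ), hjlt⟩ = i := by
        simp only [hρ0]
        rw [dif_pos i.2]
      have hmem : (⟨(i : ℕ), hjlt⟩ : Fin m) ∈
          Finset.univ.filter (fun j => ρ0 j = i) := by
        simp [hval]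
      calc (0 : ℝ) < v ⟨(i : ℕ), hjlt⟩ := hv _
        _ ≤ V v ρ0 i := Finset.single_le_sum (fun j _ => (hv j).le) hmem
    have hprod0 : 0 < ∏ i, V v ρ0 i := Finset.prod_pos fun i _ => hρ0pos i
    have h1 : 0 < NSW v ρ0 := Real.rpow_pos_of_pos hprod0 _
    have h2 : 0 < NSW v πs := lt_of_lt_of_le h1 (hopt ρ0)
    have hprods : 0 < ∏ i, V v πs i := by
      rcases (Finset.prod_nonneg fun i (_ : i ∈ Finset.univ) => hVnn πs i).lt_or_eq with h | h
      · exact h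
      · exfalso
        rw [NSW, ← h, Real.zero_rpow] at h2
        · exact lt_irrefl 0 h2
        · rw [ne_eq, div_eq_zero_iff]
          push_neg
          constructor
          · exact one_ne_zero
          · rw [hcardn]; exact hNpos.ne'
    intro i
    rcases (hVnn πs i).lt_or_eq with h | h
    · exact h
    · exfalso
      have : ∏ i, V v πs i = 0 := Finset.prod_eq_zero (Finset.mem_univ i) h.symm
      rw [this] at hprods; exact lt_irrefl 0 hprods
  -- total value of reduced agents equals total value of reduced goods
  have hsum : ∑ i ∈ A0ᶜ, V v πs i = ∑ j ∈ G0ᶜ, v j := by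
    calc ∑ i ∈ A0ᶜ, V v πs i
        = ∑ j ∈ Finset.univ.filter (fun j => πs j ∈ A0ᶜ), v j :=
          Finset.sum_fiberwise_eq_sum_filter _ _ _ _
      _ = ∑ j ∈ G0ᶜ, v j := by
          congr 1
          ext j
          simp only [Finset.mem_filter, Finset.mem_univ, true_and, Finset.mem_compl]
          constructor
          · intro h hjG0; exact h (hin j hjG0)
          · exact fun h => hout j h
  -- the maximal reduced agent
  have hA0cne : (A0ᶜ : Finset (Fin n)).Nonempty := by
    rw [← Finset.card_pos, Finset.card_compl, hA0card, Fintype.card_fin]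
    omega
  obtain ⟨b, hbmem, hbmax⟩ := Finset.exists_max_image A0ᶜ (V v πs) hA0cne
  have hcardA0c : (A0ᶜ : Finset (Fin n)).card = n - k := by
    rw [Finset.card_compl, hA0card, Fintype.card_fin]
  have hμb : (∑ j ∈ G0ᶜ, v j) / NK ≤ V v πs b := by
    rw [div_le_iff₀ hNKpos]
    have h := Finset.sum_le_card_nsmul A0ᶜ (V v πs) (V v πs b) (fun i hi => hbmax i hi)
    rw [hsum, hcardA0c, nsmul_eq_mul, hNKcast] at h
    linarith [h]
  have hwb : w < V v πs b := lt_of_lt_of_le hwμ' hμb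
  have hbA0 : b ∉ A0 := Finset.mem_compl.mp hbmem
  -- b's bundle and its minimal good
  have hBG0 : ∀ j : Fin m, πs j = b → j ∉ G0 := by
    intro j hjb hjG0
    exact hbA0 (hjb ▸ hin j hjG0)
  have hBne : (Finset.univ.filter (fun j => πs j = b)).Nonempty := by
    by_contra h
    rw [Finset.not_nonempty_iff_eq_empty] at h
    have : V v πs b = 0 := by rw [V, h, Finset.sum_empty]
    linarith [hposall b]
  obtain ⟨js, hjsB, hjsmin⟩ := Finset.exists_min_image _ v hBne
  have hjsb : πs js = b := (Finset.mem_filter.mp hjsB).2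
  have hjsG0 : js ∉ G0 := hBG0 js hjsb
  -- b's bundle has at least two goods, so v js ≤ V_b / 2
  have hjs2 : 2 * v js ≤ V v πs b := by
    obtain ⟨j2, hj2B, hj2ne⟩ : ∃ j2 ∈ Finset.univ.filter (fun j => πs j = b), j2 ≠ js := by
      by_contra h
      push_neg at h
      have hsing : Finset.univ.filter (fun j => πs j = b) = {js} := by
        apply Finset.eq_singleton_iff_unique_mem.mpr
        exact ⟨hjsB, fun x hx => h x hx⟩
      have : V v πs b = v js := by rw [V, hsing, Finset.sum_singleton]
      have := hwub js hjsG0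
      linarith [hwb]
    have hsub : ({js, j2} : Finset (Fin m)) ⊆ Finset.univ.filter (fun j => πs j = b) := by
      intro x hx
      rcases Finset.mem_insert.mp hx with h | h
      · exact h ▸ hjsB
      · exact (Finset.mem_singleton.mp h) ▸ hj2B
    have hle : ∑ j ∈ ({js, j2} : Finset (Fin m)), v j ≤ V v πs b :=
      Finset.sum_le_sum_of_subset_of_nonneg hsub (fun j _ _ => (hv j).le)
    rw [Finset.sum_insert (by simp [hj2ne.symm]), Finset.sum_singleton] at hle
    have := hjsmin j2 hj2B
    linarith
  -- exchange argument: every reduced agent has value ≥ V_b - v js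
  have hminbound : ∀ a ∈ A0ᶜ, V v πs b - v js ≤ V v πs a := by
    intro a hamem
    by_cases hab : a = b
    · subst hab; linarith [hv js]
    set ρ : Fin m → Fin n := Function.update πs js a with hρ
    have haA0 : a ∉ A0 := Finset.mem_compl.mp hamem
    have hρbundle : ∀ i ∈ A0, Finset.univ.filter (fun j => ρ j = i) = {σ i} := by
      intro i hi
      rw [← hπsbundle i hi]
      ext j
      simp only [Finset.mem_filter, Finset.mem_univ, true_and]
      by_cases hj : j = js
      · subst hj
        rw [hρ, Function.update_self]
        constructor
        · intro h; exact absurd (h ▸ hi) haA0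
        · intro h; exact absurd hi ((hjsb.symm.trans h) ▸ hbA0)
      · rw [hρ, Function.update_of_ne hj]
    have hkey := hopt' ρ hρbundle
    have hprodle : ∏ i ∈ A0ᶜ, V v ρ i ≤ ∏ i ∈ A0ᶜ, V v πs i := by
      by_contra hlt
      push_neg at hlt
      have h2 := Real.rpow_lt_rpow (Finset.prod_nonneg fun i _ => hVnn πs i) hlt
        (by positivity : (0 : ℝ) < 1 / NK)
      exact absurd hkey (not_le.mpr h2)
    -- values under ρ
    have hρa : V v ρ a = V v πs a + v js := by
      have hfil : Finset.univ.filter (fun j => ρ j = a)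
          = insert js (Finset.univ.filter (fun j => πs j = a)) := by
        ext j
        simp only [Finset.mem_filter, Finset.mem_univ, true_and, Finset.mem_insert]
        by_cases hj : j = js
        · subst hj
          rw [hρ, Function.update_self]
          simp
        · rw [hρ, Function.update_of_ne hj]
          simp [hj]
      have hjsnot : js ∉ Finset.univ.filter (fun j => πs j = a) := by
        simp only [Finset.mem_filter, Finset.mem_univ, true_and]
        rw [hjsb]; exact fun h => hab h.symm
      rw [V, hfil, Finset.sum_insert hjsnot]
      rw [V]; ring
    have hρb : V v ρ b = V v πs b - v js := by
      have hfil : Finset.univ.filter (fun j => ρ j = b)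
          = (Finset.univ.filter (fun j => πs j = b)).erase js := by
        ext j
        simp only [Finset.mem_filter, Finset.mem_univ, true_and, Finset.mem_erase]
        by_cases hj : j = js
        · subst hj
          rw [hρ, Function.update_self]
          simp [hab]
        · rw [hρ, Function.update_of_ne hj]
          simp [hj]
      rw [V, hfil, Finset.sum_erase_eq_sub hjsB]
      rfl
    have hρother : ∀ i : Fin n, i ≠ a → i ≠ b → V v ρ i = V v πs i := by
      intro i hia hib
      rw [V, V]
      apply Finset.sum_congr _ (fun _ _ => rfl)
      ext j
      simp only [Finset.mem_filter, Finset.mem_univ, true_and]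
      by_cases hj : j = js
      · subst hj
        rw [hρ, Function.update_self, hjsb]
        constructor
        · intro h; exact absurd h.symm hia
        · intro h; exact absurd h.symm hib
      · rw [hρ, Function.update_of_ne hj]
    have hbmem' : b ∈ (A0ᶜ : Finset (Fin n)).erase a :=
      Finset.mem_erase.mpr ⟨fun h => hab h.symm, hbmem⟩
    have hRpos : 0 < ∏ i ∈ ((A0ᶜ : Finset (Fin n)).erase a).erase b, V v πs i :=
      Finset.prod_pos fun i _ => hposall i
    have hprodπs : ∏ i ∈ A0ᶜ, V v πs i
        = (V v πs a * V v πs b) * ∏ i ∈ ((A0ᶜ : Finset (Fin n)).erase a).erase b, V v πs i := by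
      rw [← Finset.mul_prod_erase _ _ hamem, ← Finset.mul_prod_erase _ _ hbmem', mul_assoc]
    have hprodρ : ∏ i ∈ A0ᶜ, V v ρ i
        = ((V v πs a + v js) * (V v πs b - v js))
          * ∏ i ∈ ((A0ᶜ : Finset (Fin n)).erase a).erase b, V v πs i := by
      rw [← Finset.mul_prod_erase _ _ hamem, ← Finset.mul_prod_erase _ _ hbmem', hρa, hρb,
        mul_assoc]
      congr 1
      congr 1
      apply Finset.prod_congr rfl
      intro i hi
      have hib : i ≠ b := (Finset.mem_erase.mp hi).1
      have hia : i ≠ a := (Finset.mem_erase.mp (Finset.mem_erase.mp hi).2).1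
      exact hρother i hia hib
    rw [hprodπs, hprodρ] at hprodle
    have h2 : (V v πs a + v js) * (V v πs b - v js) ≤ V v πs a * V v πs b :=
      le_of_mul_le_mul_right hprodle hRpos
    nlinarith [hv js]
  -- hence every reduced agent has value > w/2
  have hmin : ∀ a ∈ A0ᶜ, w / 2 < V v πs a := by
    intro a ha
    have h1 := hminbound a ha
    linarith [hjs2, hwb]
  ---- the analytic endgame
  set P := ∏ i ∈ A0, v (σ i) with hPdef
  set X := ∏ i ∈ A0ᶜ, V v π i with hXdef
  set Y := ∏ i ∈ A0ᶜ, V v πs i with hYdef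
  have hPpos : 0 < P := Finset.prod_pos fun i _ => hv (σ i)
  have hXnn : 0 ≤ X := Finset.prod_nonneg fun i _ => hVnn π i
  have hYpos : 0 < Y := Finset.prod_pos fun i _ => hposall i
  have hPle : P ≤ vmax ^ k := by
    rw [← hA0card, hPdef]
    calc ∏ i ∈ A0, v (σ i) ≤ ∏ _i ∈ A0, vmax :=
          Finset.prod_le_prod (fun i _ => (hv _).le) (fun i _ => hvmax.2 ⟨σ i, rfl⟩)
      _ = vmax ^ A0.card := Finset.prod_const _
  -- NSW decomposition
  have hNSWπ : NSW v π = P ^ ((1 : ℝ) / (n : ℝ)) * X ^ ((1 : ℝ) / (n : ℝ)) := by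
    rw [NSW]
    rw [show ((Fintype.card (Fin n)) : ℝ) = (n : ℝ) from hcardn]
    rw [← Finset.prod_mul_prod_compl A0 (V v π)]
    rw [show ∏ i ∈ A0, V v π i = P from Finset.prod_congr rfl (fun i hi => hVπA0 i hi)]
    rw [← hXdef, Real.mul_rpow hPpos.le hXnn]
  have hNSWπs : NSW v πs = P ^ ((1 : ℝ) / (n : ℝ)) * Y ^ ((1 : ℝ) / (n : ℝ)) := by
    rw [NSW]
    rw [show ((Fintype.card (Fin n)) : ℝ) = (n : ℝ) from hcardn]
    rw [← Finset.prod_mul_prod_compl A0 (V v πs)]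
    rw [show ∏ i ∈ A0, V v πs i = P from Finset.prod_congr rfl (fun i hi => hVπsA0 i hi)]
    rw [← hYdef, Real.mul_rpow hPpos.le hYpos.le]
  set x := X ^ ((1 : ℝ) / NK) with hxdef
  set y := Y ^ ((1 : ℝ) / NK) with hydef
  have hxnn : 0 ≤ x := Real.rpow_nonneg hXnn _
  have hexp : (1 : ℝ) / NK * (NK / (n : ℝ)) = 1 / (n : ℝ) := by
    field_simp
  have hXx : x ^ (NK / (n : ℝ)) = X ^ ((1 : ℝ) / (n : ℝ)) := by
    rw [hxdef, ← Real.rpow_mul hXnn, hexp]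
  have hYy : y ^ (NK / (n : ℝ)) = Y ^ ((1 : ℝ) / (n : ℝ)) := by
    rw [hydef, ← Real.rpow_mul hYpos.le, hexp]
  -- y ≥ w/2
  have hw2pos : (0 : ℝ) < w / 2 := by linarith
  have hyw : w / 2 ≤ y := by
    have hYlb : (w / 2) ^ (n - k : ℕ) ≤ Y := by
      rw [hYdef, ← hcardA0c]
      calc (w / 2) ^ (A0ᶜ : Finset (Fin n)).card = ∏ _i ∈ A0ᶜ, (w / 2) :=
            (Finset.prod_const _).symm
        _ ≤ ∏ i ∈ A0ᶜ, V v πs i :=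
            Finset.prod_le_prod (fun _ _ => hw2pos.le) (fun i hi => (hmin i hi).le)
    calc w / 2 = ((w / 2) ^ (n - k : ℕ)) ^ ((1 : ℝ) / NK) := by
          rw [← Real.rpow_natCast (w / 2) (n - k), ← Real.rpow_mul hw2pos.le, hNKcast,
            mul_one_div, div_self hNKpos.ne', Real.rpow_one]
      _ ≤ y := Real.rpow_le_rpow (by positivity) hYlb (by positivity)
  have hypos : 0 < y := lt_of_lt_of_le hw2pos hyw
  -- exponent facts
  have hrpos : (0 : ℝ) < NK / (n : ℝ) := by positivity
  have hrle1 : NK / (n : ℝ) ≤ 1 := by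
    rw [div_le_one hNpos, hNKdef]
    linarith only [Nat.cast_nonneg (α := ℝ) k]
  have hcpos : 0 < P ^ ((1 : ℝ) / (n : ℝ)) := Real.rpow_pos_of_pos hPpos _
  rw [ge_iff_le, hNSWπ, hNSWπs, ← hXx, ← hYy]
  have h192 : (0 : ℝ) ≤ 192 * ε * vmax := by positivity
  rcases le_or_gt y x with hcase | hcase
  · -- easy case: x ≥ y
    have h1 : y ^ (NK / (n : ℝ)) ≤ x ^ (NK / (n : ℝ)) :=
      Real.rpow_le_rpow hypos.le hcase hrpos.le
    have h2 := mul_le_mul_of_nonneg_left h1 hcpos.le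
    linarith only [h2, h192]
  · -- hard case: y - δ ≤ x < y
    set δ := 48 * ε * w with hδdef
    have hδpos : 0 < δ := by rw [hδdef]; positivity
    have hδle : δ ≤ w / 4 := by
      have h := mul_le_mul_of_nonneg_right hε' hwpos.le
      rw [hδdef]; linarith only [h]
    have hxy : y - δ ≤ x := by linarith only [hred]
    have hyδpos : 0 < y - δ := by linarith only [hyw, hδle, hwpos]
    have htpos : 0 < 1 - δ / y := by
      rw [sub_pos, div_lt_one hypos]; linarith only [hyw, hδle, hwpos]
    have htle : 1 - δ / y ≤ 1 := by
      have h0 : 0 ≤ δ / y := by positivity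
      linarith only [h0]
    have hfac : y - δ = y * (1 - δ / y) := by field_simp
    have h1 : (y - δ) ^ (NK / (n : ℝ)) = y ^ (NK / (n : ℝ)) * (1 - δ / y) ^ (NK / (n : ℝ)) := by
      rw [hfac, Real.mul_rpow hypos.le htpos.le]
    have h2 : (1 - δ / y) ≤ (1 - δ / y) ^ (NK / (n : ℝ)) := by
      calc (1 - δ / y) = (1 - δ / y) ^ (1 : ℝ) := (Real.rpow_one _).symm
        _ ≤ (1 - δ / y) ^ (NK / (n : ℝ)) :=
            Real.rpow_le_rpow_of_exponent_ge htpos htle hrle1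
    have hyrpos : 0 < y ^ (NK / (n : ℝ)) := Real.rpow_pos_of_pos hypos _
    have h3 : y ^ (NK / (n : ℝ)) - y ^ (NK / (n : ℝ)) * (δ / y) ≤ (y - δ) ^ (NK / (n : ℝ)) := by
      rw [h1]
      have hh := mul_le_mul_of_nonneg_left h2 hyrpos.le
      linarith only [hh]
    -- the key upper bound
    have hepos : (0 : ℝ) ≤ (k : ℝ) / (n : ℝ) := by positivity
    have hele : (k : ℝ) / (n : ℝ) ≤ 1 := by
      rw [div_le_one hNpos]; exact hkr.le
    have m1 : (w / 2) ^ ((k : ℝ) / (n : ℝ)) ≤ y ^ ((k : ℝ) / (n : ℝ)) :=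
      Real.rpow_le_rpow hw2pos.le hyw hepos
    have m2 : P ^ ((1 : ℝ) / (n : ℝ)) ≤ vmax ^ ((k : ℝ) / (n : ℝ)) := by
      calc P ^ ((1 : ℝ) / (n : ℝ)) ≤ (vmax ^ k) ^ ((1 : ℝ) / (n : ℝ)) :=
            Real.rpow_le_rpow hPpos.le hPle (by positivity)
        _ = vmax ^ ((k : ℝ) / (n : ℝ)) := by
            rw [← Real.rpow_natCast vmax k, ← Real.rpow_mul hvmaxpos.le, mul_one_div]
    have m3 : vmax ^ ((k : ℝ) / (n : ℝ)) / (w / 2) ^ ((k : ℝ) / (n : ℝ))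
        = (vmax / (w / 2)) ^ ((k : ℝ) / (n : ℝ)) :=
      (Real.div_rpow hvmaxpos.le hw2pos.le _).symm
    have m4 : (vmax / (w / 2)) ^ ((k : ℝ) / (n : ℝ)) ≤ vmax / (w / 2) := by
      have hbase : 1 ≤ vmax / (w / 2) := by
        rw [le_div_iff₀ hw2pos]; linarith only [hwle, hwpos]
      calc (vmax / (w / 2)) ^ ((k : ℝ) / (n : ℝ)) ≤ (vmax / (w / 2)) ^ (1 : ℝ) :=
            Real.rpow_le_rpow_of_exponent_le hbase hele
        _ = vmax / (w / 2) := Real.rpow_one _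
    have hre : NK / (n : ℝ) = 1 - (k : ℝ) / (n : ℝ) := by
      rw [hNKdef]; field_simp
    have hyr : y ^ (NK / (n : ℝ)) = y / y ^ ((k : ℝ) / (n : ℝ)) := by
      rw [hre, Real.rpow_sub hypos, Real.rpow_one]
    have hyepos : 0 < y ^ ((k : ℝ) / (n : ℝ)) := Real.rpow_pos_of_pos hypos _
    have hfinal : P ^ ((1 : ℝ) / (n : ℝ)) * y ^ (NK / (n : ℝ)) * (δ / y)
        = (P ^ ((1 : ℝ) / (n : ℝ)) / y ^ ((k : ℝ) / (n : ℝ))) * δ := by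
      rw [hyr]
      field_simp
    have hdivle : P ^ ((1 : ℝ) / (n : ℝ)) / y ^ ((k : ℝ) / (n : ℝ)) ≤ vmax / (w / 2) := by
      calc P ^ ((1 : ℝ) / (n : ℝ)) / y ^ ((k : ℝ) / (n : ℝ))
          ≤ vmax ^ ((k : ℝ) / (n : ℝ)) / (w / 2) ^ ((k : ℝ) / (n : ℝ)) :=
            div_le_div₀ (by positivity) m2 (by positivity) m1
        _ = (vmax / (w / 2)) ^ ((k : ℝ) / (n : ℝ)) := m3
        _ ≤ vmax / (w / 2) := m4
    have hkey : P ^ ((1 : ℝ) / (n : ℝ)) * y ^ (NK / (n : ℝ)) * (δ / y) ≤ 96 * ε * vmax := by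
      rw [hfinal]
      calc (P ^ ((1 : ℝ) / (n : ℝ)) / y ^ ((k : ℝ) / (n : ℝ))) * δ
          ≤ (vmax / (w / 2)) * δ := mul_le_mul_of_nonneg_right hdivle hδpos.le
        _ = 96 * ε * vmax := by
            rw [hδdef]; field_simp; ring
    -- assemble
    have hxr : (y - δ) ^ (NK / (n : ℝ)) ≤ x ^ (NK / (n : ℝ)) :=
      Real.rpow_le_rpow hyδpos.le hxy hrpos.le
    have hc3 : P ^ ((1 : ℝ) / (n : ℝ)) * (y ^ (NK / (n : ℝ)) - y ^ (NK / (n : ℝ)) * (δ / y))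
        ≤ P ^ ((1 : ℝ) / (n : ℝ)) * x ^ (NK / (n : ℝ)) :=
      mul_le_mul_of_nonneg_left (le_trans h3 hxr) hcpos.le
    have hdist : P ^ ((1 : ℝ) / (n : ℝ)) * (y ^ (NK / (n : ℝ)) - y ^ (NK / (n : ℝ)) * (δ / y))
        = P ^ ((1 : ℝ) / (n : ℝ)) * y ^ (NK / (n : ℝ))
          - P ^ ((1 : ℝ) / (n : ℝ)) * y ^ (NK / (n : ℝ)) * (δ / y) := by ring
    have h96 : 96 * ε * vmax ≤ 192 * ε * vmax := by
      linarith only [mul_pos hε hvmaxpos]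
    rw [hdist] at hc3
    linarith only [hc3, hkey, h96]
end

section
/- Let n, k be integers with 0 ≤ k < n, and let C, w, V, ε, a, b be real numbers with C > 0, 0 < w ≤ V, 0 < ε ≤ 1/192, C ≤ V^(k/n), (1/2 − 48ε)·w ≤ a ≤ b ≤ a + 48ε·w. Then C·b^((n−k)/n) − C·a^((n−k)/n) ≤ 192ε·V. -/
/-- Mean-value-theorem estimate for `g(x) = C · x^((n-k)/n)`: an additive error of at most
`48 ε w` on the argument yields an additive error of at most `192 ε V` on the value. -/
theorem stmt11 (n k : ℕ) (hkn : k < n)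
    (C w V ε a b : ℝ)
    (hC : 0 < C) (hw : 0 < w) (hwV : w ≤ V)
    (hε : 0 < ε) (hε' : ε ≤ 1 / 192)
    (hCV : C ≤ V ^ ((k : ℝ) / (n : ℝ)))
    (ha : (1 / 2 - 48 * ε) * w ≤ a) (hab : a ≤ b) (hb : b ≤ a + 48 * ε * w) :
    C * b ^ (((n : ℝ) - (k : ℝ)) / (n : ℝ)) - C * a ^ (((n : ℝ) - (k : ℝ)) / (n : ℝ)) ≤
      192 * ε * V := by
  have hn : (0:ℝ) < (n:ℝ) := by exact_mod_cast (Nat.zero_le k).trans_lt hkn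
  set α : ℝ := ((n : ℝ) - (k : ℝ)) / (n : ℝ) with hα
  have hα0 : 0 < α := by
    apply div_pos _ hn
    have : (k:ℝ) < n := by exact_mod_cast hkn
    linarith
  have hα1 : α ≤ 1 := by
    rw [hα, div_le_one hn]
    have : (0:ℝ) ≤ (k:ℝ) := Nat.cast_nonneg k
    linarith
  have hαc : (k:ℝ) / (n:ℝ) = 1 - α := by
    rw [hα]; field_simp; ring
  have ha4 : w / 4 ≤ a := by nlinarith
  have ha0 : 0 < a := lt_of_lt_of_le (by linarith) ha4
  have hV : 0 < V := lt_of_lt_of_le hw hwV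
  have hba0 : 0 ≤ b - a := sub_nonneg.mpr hab
  -- Bernoulli: (b/a)^α ≤ 1 + α * ((b-a)/a)
  have hbern : (b / a) ^ α ≤ 1 + α * ((b - a) / a) := by
    have hsge : (-1 : ℝ) ≤ (b - a) / a := le_trans (by norm_num) (div_nonneg hba0 ha0.le)
    have := rpow_one_add_le_one_add_mul_self hsge hα0.le hα1
    have h1 : 1 + (b - a) / a = b / a := by field_simp; ring
    rwa [h1] at this
  have hba : b ^ α ≤ a ^ α * (1 + α * ((b - a) / a)) := by
    calc b ^ α = (b / a) ^ α * a ^ α := by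
          rw [← Real.mul_rpow (div_nonneg (ha0.le.trans hab) ha0.le) ha0.le]; field_simp
      _ ≤ (1 + α * ((b - a) / a)) * a ^ α :=
          mul_le_mul_of_nonneg_right hbern (Real.rpow_pos_of_pos ha0 α).le
      _ = a ^ α * (1 + α * ((b - a) / a)) := mul_comm _ _
  have key : C * b ^ α - C * a ^ α ≤ C * a ^ α * (b - a) / a := by
    have h2 : C * b ^ α ≤ C * a ^ α + C * a ^ α * (α * ((b - a) / a)) := by
      calc C * b ^ α ≤ C * (a ^ α * (1 + α * ((b - a) / a))) :=
            mul_le_mul_of_nonneg_left hba hC.le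
        _ = C * a ^ α + C * a ^ α * (α * ((b - a) / a)) := by ring
    have h3 : C * a ^ α * (α * ((b - a) / a)) ≤ C * a ^ α * (b - a) / a := by
      rw [mul_div_assoc]
      exact mul_le_mul_of_nonneg_left
        (mul_le_of_le_one_left (div_nonneg hba0 ha0.le) hα1) (by positivity)
    linarith
  have hcw : C * (w/4) ^ α ≤ V := by
    calc C * (w/4) ^ α ≤ V ^ (1 - α) * V ^ α := by
          apply mul_le_mul (hαc ▸ hCV) (Real.rpow_le_rpow (by positivity) (by linarith) hα0.le)
            (by positivity) (by positivity)
      _ = V := by rw [← Real.rpow_add hV]; simp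
  have haα : a ^ α / a ≤ (w/4) ^ α / (w/4) := by
    rw [← Real.rpow_sub_one ha0.ne', ← Real.rpow_sub_one (by positivity)]
    exact Real.rpow_le_rpow_of_nonpos (by positivity) ha4 (by linarith)
  calc C * b ^ α - C * a ^ α ≤ C * a ^ α * (b - a) / a := key
    _ ≤ C * ((w/4) ^ α / (w/4)) * (48 * ε * w) := by
        have hba' : b - a ≤ 48 * ε * w := by linarith
        have h1 : C * a ^ α * (b - a) / a = C * (a ^ α / a) * (b - a) := by ring
        rw [h1]
        apply mul_le_mul (mul_le_mul_of_nonneg_left haα hC.le) hba' (by linarith) (by positivity)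
    _ = 192 * ε * (C * (w/4) ^ α) := by field_simp; ring
    _ ≤ 192 * ε * V := by
        apply mul_le_mul_of_nonneg_left hcw (by positivity)
end
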